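/- Let A be an n-dimensional affine subspace of a Hilbert space E, z ∈ A, and let h : (direction space of A) → R≥0 be defined by h(v) = dist(z+v, A')² for another n-dimensional affine subspace A'. Then h is a polynomial of degree 2 of the form h(v) = Q(v) + L(v) + h(0), where L is linear and Q is the nonnegative quadratic form Q(v) = sin²∠(v, A'⃗)·|v|². Consequently, if h(v) ≤ 4δ² for all v with |v| ≤ ρ, then for any v_0 with |v_0| = ρ one has Q(v_0) = (h(v_0)+h(−v_0))/2 − h(0) ≤ 4δ², so sin∠(A⃗, A'⃗) ≤ 2δ/ρ. -/

import Mathlib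

open Metric

/-- `sin` of the (maximal principal) angle between two subspaces `V, W` of a Hilbert space. -/
noncomputable def sinAngle {E : Type*} [NormedAddCommGroup E] [InnerProductSpace ℝ E]
    (V W : Submodule ℝ E) : ℝ :=
  sSup ((fun v => Metric.infDist v (W : Set E)) '' {v : E | v ∈ V ∧ ‖v‖ = 1})

/-!
Write `A' = a + W`. The distance from `x` to `A'` is `‖P (x - a)‖`, where `P` is the orthogonal
projection onto `Wᗮ`, so `h v = ‖P v + P (z - a)‖² = ‖P v‖² + 2 ⟪P v, P (z - a)⟫ + h 0`, and
`‖P v‖ = dist(v, W) = sin∠(v, W) ‖v‖`. The linear term cancels in `(h v + h (-v)) / 2 - h 0`,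
which is therefore `dist(v, W)²`; for `‖v‖ = ρ` it is at most `4δ²`, whence
`dist(u, W) ≤ 2δ/ρ` for every unit vector `u ∈ V`.
-/

open scoped Pointwise

section NormedSpace

variable {𝕜 E : Type*} [NormedField 𝕜] [SeminormedAddCommGroup E] [NormedSpace 𝕜 E]

theorem Submodule.smul_coe_of_ne_zero (K : Submodule 𝕜 E) {c : 𝕜} (hc : c ≠ 0) :
    c • (K : Set E) = K := by
  ext x
  rw [Set.mem_smul_set_iff_inv_smul_mem₀ hc, SetLike.mem_coe, SetLike.mem_coe,
    K.smul_mem_iff (inv_ne_zero hc)]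

theorem infDist_smul_submodule (K : Submodule 𝕜 E) (c : 𝕜) (x : E) :
    infDist (c • x) K = ‖c‖ * infDist x K := by
  rcases eq_or_ne c 0 with rfl | hc
  · simp [infDist_zero_of_mem K.zero_mem]
  · rw [← infDist_smul₀ hc, K.smul_coe_of_ne_zero hc]

theorem infDist_inv_norm_smul_mul_norm {F : Type*} [NormedAddCommGroup F] [NormedSpace ℝ F]
    (K : Submodule ℝ F) (x : F) :
    infDist (‖x‖⁻¹ • x) K * ‖x‖ = infDist x K := by
  rw [infDist_smul_submodule, norm_inv, norm_norm]
  rcases eq_or_ne ‖x‖ 0 with hx | hx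
  · simp [norm_eq_zero.mp hx, infDist_zero_of_mem K.zero_mem]
  · field_simp

theorem infDist_affineSubspace_eq_infDist_sub (s : AffineSubspace 𝕜 E) {a : E} (ha : a ∈ s)
    (x : E) : infDist x s = infDist (x - a) s.direction := by
  rw [AffineSubspace.coe_direction_eq_vsub_set_right ha]
  exact (infDist_image (Isometry.of_dist_eq fun _ _ => dist_sub_right _ _ _)).symm

end NormedSpace

section InnerProductSpace

variable {E : Type*} [NormedAddCommGroup E] [InnerProductSpace ℝ E]

theorem infDist_submodule_eq_norm_starProjection_orthogonal (K : Submodule ℝ E)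
    [K.HasOrthogonalProjection] (x : E) : infDist x K = ‖Kᗮ.starProjection x‖ := by
  rw [Submodule.starProjection_orthogonal_val, Submodule.starProjection_minimal, infDist_eq_iInf]
  exact iInf_congr fun y => dist_eq_norm _ _

theorem exists_linearMap_sq_infDist_add (s : AffineSubspace ℝ E) (hs : (s : Set E).Nonempty)
    [s.direction.HasOrthogonalProjection] (z : E) :
    ∃ L : E →ₗ[ℝ] ℝ, ∀ v,
      infDist (z + v) s ^ 2 = infDist v s.direction ^ 2 + L v + infDist z s ^ 2 := by
  obtain ⟨a, ha⟩ := hs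
  let P := s.directionᗮ.starProjection
  refine ⟨(2 • (innerSL ℝ (P (z - a))).comp P : E →L[ℝ] ℝ), fun v => ?_⟩
  rw [infDist_affineSubspace_eq_infDist_sub s ha, infDist_affineSubspace_eq_infDist_sub s ha,
    add_sub_right_comm]
  simp only [infDist_submodule_eq_norm_starProjection_orthogonal]
  rw [map_add, norm_add_sq_real]
  simp only [ContinuousLinearMap.coe_coe, smul_apply, ContinuousLinearMap.comp_apply,
    innerSL_apply_apply]
  ring

theorem sinAngle_le {V W : Submodule ℝ E} {c : ℝ} (hc : 0 ≤ c)
    (h : ∀ v ∈ V, ‖v‖ = 1 → infDist v W ≤ c) : sinAngle V W ≤ c :=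
  Real.sSup_le (by rintro _ ⟨v, ⟨hvV, hv⟩, rfl⟩; exact h v hvV hv) hc

end InnerProductSpace

theorem stmt9_general {E : Type*} [NormedAddCommGroup E] [InnerProductSpace ℝ E] [CompleteSpace E]
    (V : Submodule ℝ E) (A' : AffineSubspace ℝ E)
    (hne : (A' : Set E).Nonempty) (hclosed : IsClosed (A' : Set E))
    (z : E) (h : E → ℝ) (hdef : ∀ v : E, h v = (Metric.infDist (z + v) (A' : Set E)) ^ 2)
    (δ ρ : ℝ) (hρ : 0 < ρ) (hδ : 0 ≤ δ) :
    (∃ L : E →ₗ[ℝ] ℝ, ∀ v ∈ V,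
      h v = (Metric.infDist (‖v‖⁻¹ • v) (A'.direction : Set E)) ^ 2 * ‖v‖ ^ 2
        + L v + h 0) ∧
    ((∀ v ∈ V, ‖v‖ ≤ ρ → h v ≤ 4 * δ ^ 2) → ∀ v₀ ∈ V, ‖v₀‖ = ρ →
      (h v₀ + h (-v₀)) / 2 - h 0 ≤ 4 * δ ^ 2 ∧
      sinAngle V A'.direction ≤ 2 * δ / ρ) := by
  have : CompleteSpace A'.direction := (A'.isClosed_direction_iff.mpr hclosed).completeSpace_coe
  obtain ⟨L, hL⟩ := exists_linearMap_sq_infDist_add A' hne z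
  have hexpand : ∀ v, h v = infDist v A'.direction ^ 2 + L v + h 0 := fun v => by
    rw [hdef, hdef, add_zero, hL]
  have hsymm : ∀ v, (h v + h (-v)) / 2 - h 0 = infDist v A'.direction ^ 2 := fun v => by
    rw [hexpand v, hexpand (-v), ← neg_one_smul ℝ v, infDist_smul_submodule, map_smul]
    simp only [norm_neg, norm_one, one_mul, smul_eq_mul]
    ring
  have hsecondDiff : (∀ v ∈ V, ‖v‖ ≤ ρ → h v ≤ 4 * δ ^ 2) → ∀ v₀ ∈ V, ‖v₀‖ = ρ →
      (h v₀ + h (-v₀)) / 2 - h 0 ≤ 4 * δ ^ 2 := fun hbound v₀ hv₀ hnorm => by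
    have hpos := hbound v₀ hv₀ hnorm.le
    have hneg := hbound (-v₀) (V.neg_mem hv₀) (by rw [norm_neg, hnorm])
    have hzero : 0 ≤ h 0 := by rw [hdef]; positivity
    linarith
  refine ⟨⟨L, fun v _ => by rw [hexpand, ← mul_pow, infDist_inv_norm_smul_mul_norm]⟩,
    fun hbound v₀ hv₀ hnorm => ⟨hsecondDiff hbound v₀ hv₀ hnorm, sinAngle_le (by positivity) ?_⟩⟩
  intro u hu hunit
  have hρu : ‖ρ • u‖ = ρ := by rw [norm_smul, hunit, Real.norm_of_nonneg hρ.le, mul_one]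
  have hsq := hsecondDiff hbound (ρ • u) (V.smul_mem ρ hu) hρu
  rw [hsymm, infDist_smul_submodule, Real.norm_of_nonneg hρ.le] at hsq
  rw [le_div_iff₀' hρ]
  nlinarith [infDist_nonneg (x := u) (s := (A'.direction : Set E))]

/-- **Squared distance to an affine subspace is a quadratic polynomial, and the angle
estimate.**  Let `A'` be a (closed, nonempty) `n`-dimensional affine subspace of a Hilbert
space `E` with direction `W = A'.direction`, let `V` be an `n`-dimensional subspace (the
direction of `A`), `z ∈ E`, and `h(v) = dist(z + v, A')²`.  Then `h(v) = Q(v) + L(v) + h(0)`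
on `V`, with `L` linear and `Q(v) = sin²∠(v, W)·‖v‖²` (where `sin∠(v, W) = dist(v/‖v‖, W)`).
Consequently, if `h(v) ≤ 4δ²` for all `v ∈ V` with `‖v‖ ≤ ρ`, then for any `v₀ ∈ V` with
`‖v₀‖ = ρ` one has `Q(v₀) = (h(v₀) + h(−v₀))/2 − h(0) ≤ 4δ²`, so `sin∠(V, W) ≤ 2δ/ρ`. -/
theorem stmt9 {E : Type*} [NormedAddCommGroup E] [InnerProductSpace ℝ E] [CompleteSpace E]
    (n : ℕ) (V : Submodule ℝ E) (A' : AffineSubspace ℝ E)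
    (hne : (A' : Set E).Nonempty) (hclosed : IsClosed (A' : Set E))
    (hV : Module.finrank ℝ V = n) (hW : Module.finrank ℝ A'.direction = n)
    (z : E) (h : E → ℝ) (hdef : ∀ v : E, h v = (Metric.infDist (z + v) (A' : Set E)) ^ 2)
    (δ ρ : ℝ) (hρ : 0 < ρ) (hδ : 0 ≤ δ) :
    (∃ L : E →ₗ[ℝ] ℝ, ∀ v ∈ V,
      h v = (Metric.infDist (‖v‖⁻¹ • v) (A'.direction : Set E)) ^ 2 * ‖v‖ ^ 2
        + L v + h 0) ∧
    ((∀ v ∈ V, ‖v‖ ≤ ρ → h v ≤ 4 * δ ^ 2) → ∀ v₀ ∈ V, ‖v₀‖ = ρ →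
      (h v₀ + h (-v₀)) / 2 - h 0 ≤ 4 * δ ^ 2 ∧
      sinAngle V A'.direction ≤ 2 * δ / ρ) :=
  stmt9_general V A' hne hclosed z h hdef δ ρ hρ hδ
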